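/- arXiv:1505.04654 — 4 statements merged into one kernel-verified Lean document; each statement's English description precedes it below -/
import Mathlib

section
/- Let V be a finite-dimensional real normed vector space, D ⊆ V a balanced cone spanning V, S ⊆ V an arbitrary set, and f : S → [-∞, ∞) a function that is convex on every segment [x,y] ⊆ S with x - y ∈ D. If A is a connected component of the interior of S, then either f ≡ -∞ on A or f(x) > -∞ for every x ∈ A. -/
/-!
If `f x = ⊥` and `e ∈ D`, then `x + e` is the midpoint of `x` and `x + 2 • e`, so convexity on
that segment forces `f (x + e) = ⊥`. Walking along a basis of `V` made of vectors of `D`, the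
value `⊥` therefore propagates from `x` to every point of a small ball around `x` inside `S`, and
back from each such point to `x`. Hence `{f = ⊥}` is relatively clopen in the interior of `S`,
and a connected component lies entirely inside it or entirely outside it.
-/

open Set Metric Filter Topology

section

variable {V : Type*} [NormedAddCommGroup V] [NormedSpace ℝ V]

def DConvexOn (D S : Set V) (f : V → EReal) : Prop :=
  ∀ ⦃x y : V⦄, x ∈ S → y ∈ S → x - y ∈ D → segment ℝ x y ⊆ S →
    ∀ ⦃a b : ℝ⦄, 0 ≤ a → 0 ≤ b → a + b = 1 →
      f (a • x + b • y) ≤ (a : EReal) * f x + (b : EReal) * f y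

namespace DConvexOn

variable {D S : Set V} {f : V → EReal}

theorem apply_eq_bot (hf : DConvexOn D S f) {x y : V} (hx : x ∈ S) (hy : y ∈ S)
    (hxy : x - y ∈ D) (hseg : segment ℝ x y ⊆ S) (hfy : f y = ⊥) {a b : ℝ}
    (ha : 0 ≤ a) (hb : 0 < b) (hab : a + b = 1) : f (a • x + b • y) = ⊥ := by
  have h := hf hx hy hxy hseg ha hb.le hab
  -- `EReal.add_bot` holds even for `⊤ + ⊥`, so no finiteness of `f x` is needed.
  rwa [hfy, EReal.mul_bot_of_pos (by exact_mod_cast hb), EReal.add_bot, le_bot_iff] at h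

theorem add_eq_bot (hf : DConvexOn D S f) (hD : ∀ t : ℝ, ∀ v ∈ D, t • v ∈ D)
    {x e : V} (he : e ∈ D) (hS : closedBall x (2 * ‖e‖) ⊆ S) (hfx : f x = ⊥) :
    f (x + e) = ⊥ := by
  have hx : x ∈ closedBall x (2 * ‖e‖) := mem_closedBall_self (by positivity)
  have hx' : x + (2 : ℝ) • e ∈ closedBall x (2 * ‖e‖) := by
    simp [norm_smul]
  have hmid : (1 / 2 : ℝ) • (x + (2 : ℝ) • e) + (1 / 2 : ℝ) • x = x + e := by module
  rw [← hmid]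
  exact hf.apply_eq_bot (hS hx') (hS hx) (by simpa using hD 2 e he)
    (((convex_closedBall x _).segment_subset hx' hx).trans hS) hfx
    (by norm_num) (by norm_num) (by norm_num)

theorem add_sum_eq_bot (hf : DConvexOn D S f) (hD : ∀ t : ℝ, ∀ v ∈ D, t • v ∈ D)
    {ι : Type*} (s : Finset ι) {v : ι → V} (hv : ∀ i ∈ s, v i ∈ D) {x : V}
    (hS : closedBall x (2 * ∑ i ∈ s, ‖v i‖) ⊆ S) (hfx : f x = ⊥) :
    f (x + ∑ i ∈ s, v i) = ⊥ := by
  classical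
  induction s using Finset.induction_on generalizing x with
  | empty => simpa using hfx
  | insert j s hj ih =>
    rw [Finset.sum_insert hj] at hS ⊢
    rw [← add_assoc]
    have hsum : 0 ≤ ∑ i ∈ s, ‖v i‖ := by positivity
    refine ih (fun i hi => hv i (Finset.mem_insert_of_mem hi)) ?_ ?_
    · refine (closedBall_subset_closedBall' ?_).trans hS
      rw [dist_eq_norm, add_sub_cancel_left]
      linarith [norm_nonneg (v j)]
    · refine hf.add_eq_bot hD (hv j (Finset.mem_insert_self j s)) ?_ hfx
      exact (closedBall_subset_closedBall (by linarith)).trans hS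

variable {ι : Type*} [Fintype ι]

theorem eq_bot_of_basis (hf : DConvexOn D S f) (hD : ∀ t : ℝ, ∀ v ∈ D, t • v ∈ D)
    (b : Module.Basis ι ℝ V) (hb : ∀ i, b i ∈ D) {x y : V}
    (hS : closedBall x (2 * ∑ i, ‖b.equivFun (y - x) i • b i‖) ⊆ S) (hfx : f x = ⊥) :
    f y = ⊥ := by
  have h := hf.add_sum_eq_bot hD Finset.univ (fun i _ => hD _ _ (hb i)) hS hfx
  rwa [b.sum_equivFun, add_sub_cancel] at h

theorem eventually_eq_bot_iff (hf : DConvexOn D S f) (hD : ∀ t : ℝ, ∀ v ∈ D, t • v ∈ D)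
    (b : Module.Basis ι ℝ V) (hb : ∀ i, b i ∈ D) {x : V} (hx : x ∈ interior S) :
    ∀ᶠ y in 𝓝 x, (f x = ⊥ ↔ f y = ⊥) := by
  set ρ : V → ℝ := fun v => 2 * ∑ i, ‖b.equivFun v i • b i‖ with hρ_def
  have hρ : Continuous ρ := by
    have hrepr : Continuous fun v => b.equivFun v := b.equivFunL.continuous
    fun_prop
  obtain ⟨r, hr, hball⟩ := Metric.mem_nhds_iff.mp (mem_interior_iff_mem_nhds.mp hx)
  have hsmall : ∀ᶠ y in 𝓝 x, ρ (y - x) + ρ (x - y) + dist y x < r := by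
    have hcont : Continuous fun y => ρ (y - x) + ρ (x - y) + dist y x := by fun_prop
    refine hcont.continuousAt.eventually (gt_mem_nhds ?_)
    simpa [hρ_def] using hr
  filter_upwards [hsmall] with y hy
  have hρ_nonneg : ∀ v, 0 ≤ ρ v := fun v => by positivity
  have := hρ_nonneg (y - x)
  have := hρ_nonneg (x - y)
  have := @dist_nonneg _ _ y x
  constructor
  · exact hf.eq_bot_of_basis hD b hb
      ((closedBall_subset_ball (show ρ (y - x) < r by linarith)).trans hball)
  · exact hf.eq_bot_of_basis hD b hb
      ((closedBall_subset_ball' (show ρ (x - y) + dist y x < r by linarith)).trans hball)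

end DConvexOn

end

theorem dconvex_component_dichotomy_general
    {V : Type*} [NormedAddCommGroup V] [NormedSpace ℝ V] [FiniteDimensional ℝ V]
    (D : Set V) (hDbal : ∀ (t : ℝ), ∀ x ∈ D, t • x ∈ D)
    (hDspan : Submodule.span ℝ D = ⊤)
    (S : Set V) (f : V → EReal)
    (hconv : ∀ ⦃x y : V⦄, x ∈ S → y ∈ S → x - y ∈ D → segment ℝ x y ⊆ S →
      ∀ ⦃a b : ℝ⦄, 0 ≤ a → 0 ≤ b → a + b = 1 →
        f (a • x + b • y) ≤ (a : EReal) * f x + (b : EReal) * f y)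
    (x₀ : V) :
    (∀ x ∈ connectedComponentIn (interior S) x₀, f x = ⊥) ∨
      (∀ x ∈ connectedComponentIn (interior S) x₀, f x ≠ ⊥) := by
  let b := Module.Basis.ofSpan hDspan.ge
  have := FiniteDimensional.fintypeBasisIndex b
  have hb : ∀ i, b i ∈ D := fun i => Module.Basis.ofSpan_subset hDspan.ge (mem_range_self i)
  have hsame : ∀ x ∈ connectedComponentIn (interior S) x₀,
      ∀ y ∈ connectedComponentIn (interior S) x₀, (f x = ⊥ ↔ f y = ⊥) :=
    fun x hx y hy => isPreconnected_connectedComponentIn.induction₂ _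
      (fun z hz => eventually_nhdsWithin_of_eventually_nhds <|
        DConvexOn.eventually_eq_bot_iff hconv hDbal b hb (connectedComponentIn_subset _ _ hz))
      (fun _ _ _ _ _ _ => Iff.trans) (fun _ _ _ _ => Iff.symm) hx hy
  rcases em (∃ x ∈ connectedComponentIn (interior S) x₀, f x = ⊥) with ⟨x, hx, hfx⟩ | h
  · exact Or.inl fun y hy => (hsame x hx y hy).mp hfx
  · exact Or.inr fun y hy hfy => h ⟨y, hy, hfy⟩

/-- D-convex extended-real valued functions are either ≡ -∞ or > -∞
on each connected component of the interior of their domain. -/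
theorem dconvex_component_dichotomy
    {V : Type*} [NormedAddCommGroup V] [NormedSpace ℝ V] [FiniteDimensional ℝ V]
    (D : Set V) (hDbal : ∀ (t : ℝ), ∀ x ∈ D, t • x ∈ D)
    (hDspan : Submodule.span ℝ D = ⊤)
    (S : Set V) (f : V → EReal)
    (hf_lt_top : ∀ x ∈ S, f x ≠ ⊤)
    (hconv : ∀ ⦃x y : V⦄, x ∈ S → y ∈ S → x - y ∈ D → segment ℝ x y ⊆ S →
      ∀ ⦃a b : ℝ⦄, 0 ≤ a → 0 ≤ b → a + b = 1 →
        f (a • x + b • y) ≤ (a : EReal) * f x + (b : EReal) * f y)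
    (x₀ : V) (hx₀ : x₀ ∈ interior S) :
    (∀ x ∈ connectedComponentIn (interior S) x₀, f x = ⊥) ∨
      (∀ x ∈ connectedComponentIn (interior S) x₀, f x ≠ ⊥) :=
  dconvex_component_dichotomy_general D hDbal hDspan S f hconv x₀
end

section
/- A positively 1-homogeneous rank-one convex function f : ℝ^{N×n} → ℝ satisfies f(ξ + η) ≤ f(ξ) + f(η) whenever rank ξ ≤ 1 (i.e., f is subadditive with respect to rank-one summands). -/
open Set

/-- Rank-one convexity: convexity along all directions `a ⊗ b`. -/
def RankOneConvex {N n : ℕ} (f : Matrix (Fin N) (Fin n) ℝ → ℝ) : Prop :=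
  ∀ (ξ : Matrix (Fin N) (Fin n) ℝ) (a : Fin N → ℝ) (b : Fin n → ℝ),
    ConvexOn ℝ Set.univ (fun t : ℝ => f (ξ + t • Matrix.vecMulVec a b))

/-- A matrix of rank at most one is an outer product. -/
lemma exists_vecMulVec_of_rank_le_one {N n : ℕ} (ξ : Matrix (Fin N) (Fin n) ℝ)
    (hrank : ξ.rank ≤ 1) : ∃ a b, ξ = Matrix.vecMulVec a b := by
  rw [Matrix.rank] at hrank
  rw [finrank_le_one_iff] at hrank
  obtain ⟨v, hv⟩ := hrank
  refine ⟨(v : Fin N → ℝ), fun j => (hv ⟨ξ.mulVec (Pi.single j 1),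
    LinearMap.mem_range.2 ⟨Pi.single j 1, rfl⟩⟩).choose, ?_⟩
  ext i j
  have h := (hv ⟨ξ.mulVec (Pi.single j 1),
    LinearMap.mem_range.2 ⟨Pi.single j 1, rfl⟩⟩).choose_spec
  have h2 := congrFun (congrArg Subtype.val h) i
  simp only [Submodule.coe_smul, Pi.smul_apply, smul_eq_mul] at h2
  have h3 : ξ.mulVec (Pi.single j 1) i = ξ i j := by
    rw [Matrix.mulVec_single]; simp
  rw [Matrix.vecMulVec_apply, mul_comm]
  exact (h2.trans h3).symm

/-- Key lemma: along a sum of rank-one matrices, `f` grows at most linearly near a point. -/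
lemma key_linear_bound {N n : ℕ} (f : Matrix (Fin N) (Fin n) ℝ → ℝ)
    (hrc : RankOneConvex f) :
    ∀ (L : List ((Fin N → ℝ) × (Fin n → ℝ))) (M : Matrix (Fin N) (Fin n) ℝ),
      ∃ C : ℝ, 0 ≤ C ∧ ∀ s ∈ Icc (0:ℝ) 1,
        f (M + s • (L.map (fun p => Matrix.vecMulVec p.1 p.2)).sum) ≤ f M + s * C := by
  intro L
  induction L with
  | nil =>
      intro M
      exact ⟨0, le_refl 0, fun s hs => by simp⟩
  | cons p L ih =>
      intro M
      obtain ⟨C1, hC1, h1⟩ := ih M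
      obtain ⟨C2, hC2, h2⟩ := ih (M + Matrix.vecMulVec p.1 p.2)
      refine ⟨C1 + C2 + |f (M + Matrix.vecMulVec p.1 p.2)| + |f M|, by positivity, ?_⟩
      intro s hs
      obtain ⟨hs0, hs1⟩ := hs
      let R := Matrix.vecMulVec p.1 p.2
      let S := (L.map (fun p => Matrix.vecMulVec p.1 p.2)).sum
      -- convexity along R at base point M + s • S
      have conv := hrc (M + s • (L.map (fun p => Matrix.vecMulVec p.1 p.2)).sum) p.1 p.2
      have hcomb := conv.2 (mem_univ (0:ℝ)) (mem_univ (1:ℝ))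
        (by linarith : (0:ℝ) ≤ 1 - s) hs0 (by ring)
      simp only [smul_eq_mul, mul_zero, mul_one, zero_add] at hcomb
      -- hcomb : f (M + s•S + s•R) ≤ (1-s) * f (M + s•S + 0•R) + s * f (M + s•S + 1•R)
      have e0 : M + s • (L.map (fun p => Matrix.vecMulVec p.1 p.2)).sum
          + (0:ℝ) • Matrix.vecMulVec p.1 p.2
          = M + s • (L.map (fun p => Matrix.vecMulVec p.1 p.2)).sum := by simp
      have e1 : M + s • (L.map (fun p => Matrix.vecMulVec p.1 p.2)).sum
          + (1:ℝ) • Matrix.vecMulVec p.1 p.2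
          = (M + Matrix.vecMulVec p.1 p.2)
            + s • (L.map (fun p => Matrix.vecMulVec p.1 p.2)).sum := by
        rw [one_smul]; abel
      have emain : M + s • ((p :: L).map (fun p => Matrix.vecMulVec p.1 p.2)).sum
          = M + s • (L.map (fun p => Matrix.vecMulVec p.1 p.2)).sum
            + s • Matrix.vecMulVec p.1 p.2 := by
        simp only [List.map_cons, List.sum_cons, smul_add]; abel
      rw [e0, e1] at hcomb
      rw [emain]
      have b1 := h1 s ⟨hs0, hs1⟩
      have b2 := h2 s ⟨hs0, hs1⟩
      have habs1 : f (M + Matrix.vecMulVec p.1 p.2)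
          ≤ |f (M + Matrix.vecMulVec p.1 p.2)| := le_abs_self _
      have habs2 : -|f M| ≤ f M := neg_abs_le _
      have h4 := mul_le_mul_of_nonneg_left b1 (by linarith : (0:ℝ) ≤ 1 - s)
      have h5 := mul_le_mul_of_nonneg_left b2 hs0
      have h6 := mul_le_mul_of_nonneg_left habs2 hs0
      have h7 := mul_le_mul_of_nonneg_left habs1 hs0
      have h8 : 0 ≤ s * (1 - s) * C1 :=
        mul_nonneg (mul_nonneg hs0 (by linarith)) hC1
      have h9 : 0 ≤ s * (1 - s) * C2 :=
        mul_nonneg (mul_nonneg hs0 (by linarith)) hC2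
      have h10 : 0 ≤ s * s * C1 := mul_nonneg (mul_nonneg hs0 hs0) hC1
      nlinarith [h4, h5, h6, h7, h8, h9, h10]

/-- Decompose any matrix as a sum of outer products indexed by a list. -/
lemma exists_list_decomp {N n : ℕ} (η : Matrix (Fin N) (Fin n) ℝ) :
    ∃ L : List ((Fin N → ℝ) × (Fin n → ℝ)),
      (L.map (fun p => Matrix.vecMulVec p.1 p.2)).sum = η := by
  refine ⟨(Finset.univ : Finset (Fin N × Fin n)).toList.map
    (fun q => (Pi.single q.1 (η q.1 q.2), Pi.single q.2 1)), ?_⟩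
  rw [List.map_map]
  have : ∀ q : Fin N × Fin n,
      Matrix.vecMulVec (Pi.single q.1 (η q.1 q.2)) (Pi.single q.2 (1:ℝ))
        = Matrix.single q.1 q.2 (η q.1 q.2) := by
    intro q
    ext i j
    rw [Matrix.vecMulVec_apply]
    simp only [Matrix.single, Matrix.of_apply, Pi.single_apply]
    by_cases h1 : i = q.1 <;> by_cases h2 : j = q.2 <;>
      simp [h1, h2, eq_comm]
  calc ((Finset.univ : Finset (Fin N × Fin n)).toList.map
      ((fun p : (Fin N → ℝ) × (Fin n → ℝ) => Matrix.vecMulVec p.1 p.2) ∘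
        fun q => (Pi.single q.1 (η q.1 q.2), Pi.single q.2 1))).sum
      = ∑ q : Fin N × Fin n, Matrix.single q.1 q.2 (η q.1 q.2) := by
        rw [← Finset.sum_map_toList]
        congr 1
        apply List.map_congr_left
        intro q _
        exact this q
    _ = η := by
        rw [← Finset.univ_product_univ, Finset.sum_product]
        exact (Matrix.matrix_eq_sum_single η).symm

/-- a positively 1-homogeneous rank-one convex function is
subadditive with respect to rank-one summands. -/
theorem rankOneConvex_homog_subadditive_rank_one
    {N n : ℕ} (f : Matrix (Fin N) (Fin n) ℝ → ℝ)
    (hrc : RankOneConvex f)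
    (hhom : ∀ t : ℝ, 0 < t → ∀ ξ : Matrix (Fin N) (Fin n) ℝ, f (t • ξ) = t * f ξ)
    (ξ η : Matrix (Fin N) (Fin n) ℝ) (hrank : ξ.rank ≤ 1) :
    f (ξ + η) ≤ f ξ + f η := by
  obtain ⟨a, b, hab⟩ := exists_vecMulVec_of_rank_le_one ξ hrank
  obtain ⟨L, hL⟩ := exists_list_decomp η
  obtain ⟨C, hC0, hC⟩ := key_linear_bound f hrc L ξ
  -- main inequality for each s ∈ (0,1]
  have main : ∀ s : ℝ, s ∈ Ioc (0:ℝ) 1 →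
      f (ξ + η) - f ξ - f η ≤ s * (C - f η) := by
    intro s ⟨hs0, hs1⟩
    have conv := hrc η a b
    have hcomb := conv.2 (mem_univ (0:ℝ)) (mem_univ (1/s)) (by linarith : (0:ℝ) ≤ 1 - s)
      hs0.le (by ring)
    simp only [smul_eq_mul, mul_zero, mul_one_div, zero_add] at hcomb
    have hss : s / s = 1 := div_self hs0.ne'
    rw [hss] at hcomb
    have e0 : η + (0:ℝ) • Matrix.vecMulVec a b = η := by simp
    have e1 : η + (1:ℝ) • Matrix.vecMulVec a b = ξ + η := by
      rw [one_smul, ← hab]; abel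
    have e2 : η + (1/s) • Matrix.vecMulVec a b = (1/s) • (ξ + s • η) := by
      rw [← hab, smul_add, smul_smul, one_div, inv_mul_cancel₀ hs0.ne', one_smul]
      abel
    rw [e0, e1, e2] at hcomb
    rw [hhom (1/s) (by positivity) (ξ + s • η)] at hcomb
    -- hcomb : f (ξ + η) ≤ (1-s) * f η + s * ((1/s) * f (ξ + s • η))
    have hs' : s * ((1/s) * f (ξ + s • η)) = f (ξ + s • η) := by
      field_simp
    rw [hs'] at hcomb
    have hbound : f (ξ + s • η) ≤ f ξ + s * C := by
      rw [← hL]; exact hC s ⟨hs0.le, hs1⟩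
    nlinarith
  -- take s → 0⁺
  have htend : Filter.Tendsto (fun s : ℝ => s * (C - f η)) (nhdsWithin 0 (Ioi 0)) (nhds 0) := by
    have : Filter.Tendsto (fun s : ℝ => s * (C - f η)) (nhds 0) (nhds (0 * (C - f η))) :=
      (continuous_id.mul continuous_const).tendsto 0
    rw [zero_mul] at this
    exact this.mono_left nhdsWithin_le_nhds
  have hev : ∀ᶠ s in nhdsWithin (0:ℝ) (Ioi 0),
      f (ξ + η) - f ξ - f η ≤ s * (C - f η) := by
    filter_upwards [Ioc_mem_nhdsGT_of_mem (by norm_num : (0:ℝ) ∈ Ico (0:ℝ) 1)] with s hs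
    exact main s hs
  have := ge_of_tendsto htend hev
  linarith
end

section
/- Let ξ, η ∈ ⊙^k(ℝⁿ, Y) be symmetric Y-valued k-linear maps (Y a finite-dimensional inner product space). If, viewed as elements of L(ℝⁿ, ⊙^{k−1}(ℝⁿ, Y)), the difference ξ − η has rank at most one, say with (n−1)-dimensional kernel orthogonal to the unit vector ν, then ξ − η = b ⊗ ν^{⊗k} where b = (ξ − η)(ν, …, ν) ∈ Y; that is, (ξ−η)(x₁,…,x_k) = b · ∏ᵢ⟨xᵢ, ν⟩. -/
open Set
open scoped RealInnerProductSpace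

/-- if the difference of two symmetric Y-valued k-linear maps,
viewed as a linear map into (k−1)-linear maps, depends on its first argument
only through `⟨·, ν⟩ν` for a unit vector ν, then it equals `b ⊗ ν^{⊗k}` with
`b = (ξ−η)(ν,…,ν)`. -/
theorem symmetric_rank_one_difference
    {n k : ℕ} (hk : 0 < k)
    {Y : Type*} [NormedAddCommGroup Y] [InnerProductSpace ℝ Y] [FiniteDimensional ℝ Y]
    (ξ η : MultilinearMap ℝ (fun _ : Fin k => EuclideanSpace ℝ (Fin n)) Y)
    (hsymξ : ∀ (σ : Equiv.Perm (Fin k)) (v : Fin k → EuclideanSpace ℝ (Fin n)),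
      ξ (v ∘ σ) = ξ v)
    (hsymη : ∀ (σ : Equiv.Perm (Fin k)) (v : Fin k → EuclideanSpace ℝ (Fin n)),
      η (v ∘ σ) = η v)
    (ν : EuclideanSpace ℝ (Fin n)) (hν : ‖ν‖ = 1)
    (hker : ∀ v : Fin k → EuclideanSpace ℝ (Fin n),
      (ξ - η) v = (ξ - η) (Function.update v ⟨0, hk⟩ (⟪v ⟨0, hk⟩, ν⟫ • ν))) :
    ∀ v : Fin k → EuclideanSpace ℝ (Fin n),
      (ξ - η) v = (∏ i, ⟪v i, ν⟫) • ((ξ - η) fun _ => ν) := by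
  set μ := ξ - η with hμ
  have hsym : ∀ (σ : Equiv.Perm (Fin k)) (v : Fin k → EuclideanSpace ℝ (Fin n)),
      μ (v ∘ σ) = μ v := by
    intro σ v
    simp only [hμ, MultilinearMap.sub_apply, hsymξ, hsymη]
  have hker' : ∀ (i : Fin k) (v : Fin k → EuclideanSpace ℝ (Fin n)),
      μ v = μ (Function.update v i (⟪v i, ν⟫ • ν)) := by
    intro i v
    set z : Fin k := ⟨0, hk⟩
    have hσ := hsym (Equiv.swap z i) v
    have key := hker (v ∘ Equiv.swap z i)
    have h0 : (v ∘ Equiv.swap z i) z = v i := by simp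
    rw [h0] at key
    have hupd : Function.update (v ∘ Equiv.swap z i) z (⟪v i, ν⟫ • ν)
        = (Function.update v i (⟪v i, ν⟫ • ν)) ∘ (Equiv.swap z i) := by
      funext j
      by_cases hj : j = z
      · subst hj
        rw [Function.update_self, Function.comp_apply, Equiv.swap_apply_left, Function.update_self]
      · have hji : Equiv.swap z i j ≠ i := by
          intro h
          apply hj
          have h2 : Equiv.swap z i j = Equiv.swap z i z := by
            rw [h, Equiv.swap_apply_left]
          exact (Equiv.swap z i).injective h2
        simp [Function.update, hj, hji]
    rw [hupd] at key
    rw [← hσ, key]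
    exact hsym _ _
  intro v
  have main : ∀ s : Finset (Fin k),
      μ v = μ (fun i => if i ∈ s then ⟪v i, ν⟫ • ν else v i) := by
    intro s
    induction s using Finset.induction with
    | empty => simp
    | @insert a s ha ih =>
      rw [ih, hker' a]
      congr 1
      funext j
      by_cases hj : j = a
      · subst hj; simp [ha]
      · simp [Function.update, hj, Finset.mem_insert, hj]
  have := main Finset.univ
  simp only [Finset.mem_univ, if_true] at this
  rw [this, μ.map_smul_univ (fun i => ⟪v i, ν⟫) (fun _ => ν)]
end

section
/- Let D be a cone of directions in a finite-dimensional vector space V containing a basis (e_j) of V such that eᵢ ± e_j ∈ D for all i < j. Then every D-affine function f : V → ℝ (i.e., both f and −f are D-convex) is affine. -/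
open Set

/-- D-convexity on all of `V`: convexity along every line with direction in `D`. -/
def DConvex {V : Type*} [AddCommGroup V] [Module ℝ V] (D : Set V) (f : V → ℝ) : Prop :=
  ∀ (x : V), ∀ e ∈ D, ConvexOn ℝ Set.univ (fun t : ℝ => f (x + t • e))

/-!
A D-affine function is affine on every line with direction in `D`. For `i ≠ j`, comparing the
midpoint of `x` and `x + eᵢ + eⱼ` along the directions `eᵢ + eⱼ` and `eᵢ - eⱼ` gives the
parallelogram law `f (x + eᵢ) + f (x + eⱼ) = f x + f (x + eᵢ + eⱼ)`, so the increment
`f (x + eᵢ) - f x` does not change when `x` moves along any `eⱼ`. Hence it is a constant `cᵢ`,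
and `f` differs by the constant `f 0` from the linear map sending `eᵢ` to `cᵢ`.
-/

theorem eq_affine_of_convexOn_of_concaveOn {g : ℝ → ℝ} (hcvx : ConvexOn ℝ univ g)
    (hccv : ConcaveOn ℝ univ g) (t : ℝ) : g t = g 0 + t * (g 1 - g 0) := by
  have comb : ∀ p q a b : ℝ, 0 ≤ a → 0 ≤ b → a + b = 1 → g (a * p + b * q) = a * g p + b * g q :=
    fun p q a b ha hb hab => le_antisymm (hcvx.2 trivial trivial ha hb hab)
      (hccv.2 trivial trivial ha hb hab)
  rcases lt_or_ge t 0 with ht | ht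
  · -- `0` lies between `t` and `1`
    have h1t : 1 - t ≠ 0 := by linarith
    have h := comb t 1 (1 / (1 - t)) (-t / (1 - t)) (by bound) (by bound) (by field_simp; ring)
    rw [show 1 / (1 - t) * t + -t / (1 - t) * 1 = 0 by field_simp; ring] at h
    field_simp at h
    linarith
  rcases le_or_gt t 1 with ht1 | ht1
  · have h := comb 0 1 (1 - t) t (by linarith) ht (by ring)
    simp only [mul_zero, mul_one, zero_add] at h
    linarith
  · -- `1` lies between `0` and `t`
    have h := comb 0 t (1 - 1 / t) (1 / t) (by bound) (by bound) (by ring)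
    rw [show (1 - 1 / t) * 0 + 1 / t * t = 1 by field_simp; ring] at h
    field_simp at h
    linarith

theorem Module.Basis.map_add_eq_of_map_add_smul {R V W ι : Type*} [Semiring R] [AddCommMonoid V]
    [Module R V] [AddCommMonoid W] [Fintype ι] (b : Module.Basis ι R V) {f : V → W} (ℓ : V →+ W)
    (h : ∀ x i (t : R), f (x + t • b i) = f x + ℓ (t • b i)) (x v : V) :
    f (x + v) = f x + ℓ v := by
  rw [← b.sum_repr v]
  revert x
  refine Finset.sum_induction _ (fun v => ∀ x, f (x + v) = f x + ℓ v) ?_ (by simp)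
    (fun i _ x => h x i _)
  intro u w hu hw x
  rw [← add_assoc, hw, hu, map_add, add_assoc]

section DAffine

variable {V : Type*} [AddCommGroup V] [Module ℝ V] {D : Set V} {f : V → ℝ}

theorem DConvex.apply_add_smul (hf : DConvex D f) (hf' : DConvex D (fun x => -f x)) {e : V}
    (he : e ∈ D) (x : V) (t : ℝ) : f (x + t • e) = f x + t * (f (x + e) - f x) := by
  simpa using eq_affine_of_convexOn_of_concaveOn (hf x e he)
    (neg_convexOn_iff.mp (hf' x e he)) t

theorem DConvex.parallelogram (hf : DConvex D f) (hf' : DConvex D (fun x => -f x)) {e₁ e₂ : V}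
    (hadd : e₁ + e₂ ∈ D) (hsub : e₁ - e₂ ∈ D) (x : V) :
    f (x + e₁) + f (x + e₂) = f x + f (x + e₁ + e₂) := by
  have hmid₁ := hf.apply_add_smul hf' hadd x (1 / 2)
  have hmid₂ := hf.apply_add_smul hf' hsub (x + e₂) (1 / 2)
  rw [show x + e₂ + (1 / 2 : ℝ) • (e₁ - e₂) = x + (1 / 2 : ℝ) • (e₁ + e₂) by module,
    show x + e₂ + (e₁ - e₂) = x + e₁ by abel] at hmid₂
  rw [← add_assoc] at hmid₁
  linarith

theorem DConvex.increment_add_smul_self (hf : DConvex D f) (hf' : DConvex D (fun x => -f x))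
    {e : V} (he : e ∈ D) (x : V) (s : ℝ) :
    f (x + s • e + e) - f (x + s • e) = f (x + e) - f x := by
  rw [show x + s • e + e = x + (s + 1) • e by module, hf.apply_add_smul hf' he,
    hf.apply_add_smul hf' he]
  ring

theorem DConvex.increment_add_smul (hf : DConvex D f) (hf' : DConvex D (fun x => -f x))
    {e₁ e₂ : V} (he₂ : e₂ ∈ D) (hadd : e₁ + e₂ ∈ D) (hsub : e₁ - e₂ ∈ D) (x : V) (s : ℝ) :
    f (x + s • e₂ + e₁) - f (x + s • e₂) = f (x + e₁) - f x := by
  rw [show x + s • e₂ + e₁ = x + e₁ + s • e₂ by abel, hf.apply_add_smul hf' he₂,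
    hf.apply_add_smul hf' he₂]
  linear_combination -s * hf.parallelogram hf' hadd hsub x

end DAffine

theorem daffine_is_affine_general
    {V : Type*} [NormedAddCommGroup V] [NormedSpace ℝ V]
    (D : Set V)
    {ι : Type*} [Fintype ι] (b : Module.Basis ι ℝ V)
    (hbD : ∀ i, b i ∈ D)
    (hsum : ∀ i j, i ≠ j → b i + b j ∈ D)
    (hdiff : ∀ i j, i ≠ j → b i - b j ∈ D)
    (f : V → ℝ) (hf : DConvex D f) (hf' : DConvex D (fun x => -f x)) :
    ∃ (ℓ : V →ₗ[ℝ] ℝ) (c : ℝ), ∀ x, f x = ℓ x + c := by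
  have hincrement : ∀ x i, f (x + b i) - f x = f (b i) - f 0 := by
    intro x i
    have hconst := b.map_add_eq_of_map_add_smul (f := fun y => f (y + b i) - f y) 0 ?_ 0 x
    · simpa using hconst
    intro y j s
    rcases eq_or_ne i j with rfl | hij
    · simpa using hf.increment_add_smul_self hf' (hbD i) y s
    · simpa using hf.increment_add_smul hf' (hbD j) (hsum i j hij) (hdiff i j hij) y s
  let ℓ := b.constr ℝ fun i => f (b i) - f 0
  refine ⟨ℓ, f 0, fun x => ?_⟩
  have hline : ∀ y i (t : ℝ), f (y + t • b i) = f y + ℓ (t • b i) := by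
    intro y i t
    rw [hf.apply_add_smul hf' (hbD i), hincrement, map_smul, b.constr_basis, smul_eq_mul]
  simpa [add_comm] using b.map_add_eq_of_map_add_smul ℓ.toAddMonoidHom hline 0 x

/-- if the cone of directions `D` contains a basis `(eⱼ)` with
`eᵢ ± eⱼ ∈ D` for `i < j`, then every D-affine function is affine. -/
theorem daffine_is_affine
    {V : Type*} [NormedAddCommGroup V] [NormedSpace ℝ V] [FiniteDimensional ℝ V]
    (D : Set V) (hDbal : ∀ (t : ℝ), ∀ x ∈ D, t • x ∈ D)
    {ι : Type*} [Fintype ι] (b : Module.Basis ι ℝ V)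
    (hbD : ∀ i, b i ∈ D)
    (hsum : ∀ i j, i ≠ j → b i + b j ∈ D)
    (hdiff : ∀ i j, i ≠ j → b i - b j ∈ D)
    (f : V → ℝ) (hf : DConvex D f) (hf' : DConvex D (fun x => -f x)) :
    ∃ (ℓ : V →ₗ[ℝ] ℝ) (c : ℝ), ∀ x, f x = ℓ x + c :=
  daffine_is_affine_general D b hbD hsum hdiff f hf hf'
end
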